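/- arXiv:2305.03157 — 3 statements merged into one kernel-verified Lean document; each statement's English description precedes it below -/
import Mathlib

section
/- With the same setup, the generating function for all finite multisets of elements of 𝒜 (counted by total size) equals exp(Σ_{k≥1} A(x^k)/k), as an identity of formal power series, provided every element of 𝒜 has positive size. -/
open PowerSeries

/-- The formal exponential `exp f = ∑_{m≥0} f^m / m!` of a power series `f`
(intended for `f` with zero constant term, where only finitely many terms
contribute to each coefficient). -/
noncomputable def expPS (f : PowerSeries ℚ) : PowerSeries ℚ :=
  PowerSeries.mk fun n =>
    PowerSeries.coeff n (∑ m ∈ Finset.range (n + 1), (Nat.factorial m : ℚ)⁻¹ • f ^ m)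

/-- The substitution `f(x^k)` of `x^k` into the power series `f` (for `k ≥ 1`). -/
noncomputable def compXPow (f : PowerSeries ℚ) (k : ℕ) : PowerSeries ℚ :=
  PowerSeries.mk fun n => if k ∣ n then PowerSeries.coeff (n / k) f else 0

/-- The sum `∑_{k≥1} f(x^k)/k`, for `f` with zero constant term: its `n`-th
coefficient is `∑_{k ∣ n} (coeff (n/k) f)/k`. -/
noncomputable def dsum (f : PowerSeries ℚ) : PowerSeries ℚ :=
  PowerSeries.mk fun n => ∑ k ∈ n.divisors, (k : ℚ)⁻¹ * PowerSeries.coeff (n / k) f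

/-- The generating function `A(x) = ∑_{a ∈ 𝒜} x^{s a}`: coefficient of `x^n` is the
number of elements of size `n`. -/
noncomputable def genFun {α : Type*} (s : α → ℕ) : PowerSeries ℚ :=
  PowerSeries.mk fun n => (Nat.card {a : α // s a = n} : ℚ)

/-!
Write `M` for the multiset series and `L = ∑_{k≥1} A(x^k)/k`. Marking one unit of size in a
multiset and splitting off the copies of the marked element up to the marked one is a
size-preserving bijection between marked multisets and pairs (marked cycle `(a, e)` of size
`(e + 1) * s a`, multiset). Marked cycles are counted by `X L'`, so `X M' = X L' * M`. The series
`exp L` satisfies the same first-order equation, which in characteristic zero has a unique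
solution with constant term `1`.
-/

open Finset

section Derivative

variable {R : Type*}

theorem PowerSeries.coeff_X_mul_derivative [CommSemiring R] (f : R⟦X⟧) (n : ℕ) :
    coeff n (X * d⁄dX R f) = n * coeff n f := by
  cases n with
  | zero => simp
  | succ n => rw [coeff_succ_X_mul, coeff_derivative, mul_comm, Nat.cast_succ]

theorem PowerSeries.eq_of_X_mul_derivative_eq [CommRing R] [IsDomain R] [CharZero R]
    {F G h : R⟦X⟧} (hF : X * d⁄dX R F = h * F) (hG : X * d⁄dX R G = h * G)
    (hh : constantCoeff h = 0) (h₀ : constantCoeff F = constantCoeff G) : F = G := by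
  ext n
  induction n using Nat.strong_induction_on with
  | _ n ih =>
    rcases n.eq_zero_or_pos with rfl | hn
    · simpa using h₀
    -- `h` has no constant term, so `n * coeff n F` is determined by the lower coefficients
    have hrec : ∀ H : R⟦X⟧, X * d⁄dX R H = h * H →
        n * coeff n H = ∑ p ∈ antidiagonal n with p.2 < n, coeff p.1 h * coeff p.2 H := by
      intro H hH
      rw [← coeff_X_mul_derivative, hH, coeff_mul, sum_filter_of_ne]
      rintro ⟨i, j⟩ hij hne
      have := mem_antidiagonal.mp hij
      by_contra hj
      obtain rfl : i = 0 := by omega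
      simp [hh] at hne
    refine mul_left_cancel₀ (Nat.cast_ne_zero.mpr hn.ne') ?_
    rw [hrec F hF, hrec G hG]
    refine sum_congr rfl fun p hp => ?_
    rw [ih p.2 (mem_filter.mp hp).2]

end Derivative

noncomputable def expPartial (f : ℚ⟦X⟧) (N : ℕ) : ℚ⟦X⟧ :=
  ∑ m ∈ range N, (m.factorial : ℚ)⁻¹ • f ^ m

theorem coeff_expPS_eq_coeff_expPartial {f : ℚ⟦X⟧} (hf : constantCoeff f = 0) {n N : ℕ}
    (hn : n < N) : coeff n (expPS f) = coeff n (expPartial f N) := by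
  rw [expPS, coeff_mk, expPartial, map_sum, map_sum]
  refine sum_subset (range_subset_range.mpr hn) fun m _ hm => ?_
  have hnm : (n : ℕ∞) < (f ^ m).order :=
    (Nat.cast_lt.mpr (by simpa using hm)).trans_le (le_order_pow_of_constantCoeff_eq_zero m hf)
  rw [map_smul, coeff_of_lt_order n hnm, smul_zero]

theorem derivative_expPartial_succ (f : ℚ⟦X⟧) (N : ℕ) :
    d⁄dX ℚ (expPartial f (N + 1)) = d⁄dX ℚ f * expPartial f N := by
  rw [expPartial, expPartial, map_sum, sum_range_succ', mul_sum]
  simp only [pow_zero, Derivation.map_smul, Derivation.map_one_eq_zero, smul_zero, add_zero]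
  refine sum_congr rfl fun m _ => ?_
  rw [Derivation.leibniz_pow, Nat.add_sub_cancel, ← Nat.cast_smul_eq_nsmul ℚ, smul_smul,
    smul_eq_mul, mul_smul_comm, mul_comm (d⁄dX ℚ f)]
  congr 1
  rw [Nat.factorial_succ]
  push_cast
  field_simp

theorem derivative_expPS {f : ℚ⟦X⟧} (hf : constantCoeff f = 0) :
    d⁄dX ℚ (expPS f) = d⁄dX ℚ f * expPS f := by
  ext n
  rw [coeff_derivative, coeff_expPS_eq_coeff_expPartial hf (Nat.lt_succ_self (n + 1)),
    ← coeff_derivative, derivative_expPartial_succ, coeff_mul, coeff_mul]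
  refine sum_congr rfl fun p hp => ?_
  rw [coeff_expPS_eq_coeff_expPartial hf (Nat.antidiagonal.snd_lt hp)]

theorem constantCoeff_expPS (f : ℚ⟦X⟧) : constantCoeff (expPS f) = 1 := by
  simp [expPS]

theorem constantCoeff_dsum (f : ℚ⟦X⟧) : constantCoeff (dsum f) = 0 := by
  simp [dsum]

theorem coeff_X_mul_derivative_dsum (f : ℚ⟦X⟧) (n : ℕ) :
    coeff n (X * d⁄dX ℚ (dsum f)) = ∑ d ∈ n.divisors, (d : ℚ) * coeff d f := by
  rw [coeff_X_mul_derivative, dsum, coeff_mk, mul_sum,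
    ← Nat.sum_div_divisors n fun d => (d : ℚ) * coeff d f]
  refine sum_congr rfl fun k hk => ?_
  have hk0 : (k : ℚ) ≠ 0 := Nat.cast_ne_zero.mpr (Nat.pos_of_mem_divisors hk).ne'
  rw [Nat.cast_div (Nat.dvd_of_mem_divisors hk) hk0]
  field_simp

section CountingSeries

variable {β γ T : Type*}

theorem genFun_congr {u : β → ℕ} {v : γ → ℕ} (e : β ≃ γ) (h : ∀ b, v (e b) = u b) :
    genFun u = genFun v := by
  ext n
  simp only [genFun, coeff_mk]
  exact_mod_cast Nat.card_congr (e.subtypeEquiv fun b => by rw [h])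

theorem genFun_prod {u : β → ℕ} {v : γ → ℕ} (hu : ∀ n, Finite {b // u b = n})
    (hv : ∀ n, Finite {c // v c = n}) :
    genFun (fun x : β × γ => u x.1 + v x.2) = genFun u * genFun v := by
  ext n
  let e : {x : β × γ // u x.1 + v x.2 = n} ≃
      Σ p : antidiagonal n, {b // u b = p.1.1} × {c // v c = p.1.2} :=
    { toFun x :=
        ⟨⟨(u x.1.1, v x.1.2), mem_antidiagonal.mpr x.2⟩, ⟨x.1.1, rfl⟩, ⟨x.1.2, rfl⟩⟩
      invFun y :=
        ⟨(y.2.1.1, y.2.2.1), by rw [y.2.1.2, y.2.2.2]; exact mem_antidiagonal.mp y.1.2⟩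
      left_inv _ := rfl
      right_inv := by
        rintro ⟨⟨⟨i, j⟩, h⟩, ⟨b, hb⟩, ⟨c, hc⟩⟩
        dsimp only at hb hc
        subst hb hc
        rfl }
  simp only [genFun, coeff_mk, coeff_mul]
  rw [Nat.card_congr e, Nat.card_sigma, ← sum_coe_sort (antidiagonal n)]
  push_cast [Nat.card_prod]
  rfl

theorem genFun_pointed (u : β → ℕ) (Q : β → T → Prop) (hu : ∀ n, Finite {b // u b = n})
    (hQ : ∀ b, Nat.card {t // Q b t} = u b) [∀ b, Finite {t // Q b t}] :
    genFun (fun x : {x : β × T // Q x.1 x.2} => u x.1.1) = X * d⁄dX ℚ (genFun u) := by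
  ext n
  let e : {x : {x : β × T // Q x.1 x.2} // u x.1.1 = n} ≃ Σ b : {b // u b = n}, {t // Q b t} :=
    { toFun x := ⟨⟨x.1.1.1, x.2⟩, x.1.1.2, x.1.2⟩
      invFun y := ⟨⟨(y.1.1, y.2.1), y.2.2⟩, y.1.2⟩
      left_inv _ := rfl
      right_inv _ := rfl }
  have := Fintype.ofFinite {b // u b = n}
  rw [coeff_X_mul_derivative]
  simp only [genFun, coeff_mk]
  rw [Nat.card_congr e, Nat.card_sigma,
    sum_congr rfl fun (b : {b // u b = n}) _ => (hQ b).trans b.2, sum_const, card_univ,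
    smul_eq_mul, Nat.card_eq_fintype_card]
  push_cast
  ring

end CountingSeries

section Multisets

variable {α : Type*} (s : α → ℕ)

theorem finite_multiset_sum_map_eq (hfin : ∀ n, Finite {a : α // s a = n})
    (hpos : ∀ a, 0 < s a) (n : ℕ) : Finite {m : Multiset α // (m.map s).sum = n} := by
  classical
  have : Finite {a : α // s a ≤ n} :=
    ((Set.finite_Iic n).preimage' fun k _ => Set.finite_coe_iff.mp (hfin k)).to_subtype
  -- a multiset of total size `n` has at most `n` elements, all of size at most `n`
  have hcount (m : {m : Multiset α // (m.map s).sum = n}) (a : α) : m.1.count a < n + 1 := by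
    have hcard : Multiset.card m.1 ≤ (m.1.map s).sum := by
      simpa using Multiset.sum_map_le_sum_map (fun _ => 1) s fun a _ => hpos a
    have := Multiset.count_le_card a m.1
    omega
  have hsize (m : {m : Multiset α // (m.map s).sum = n}) (a : α) (ha : a ∈ m.1) : s a ≤ n :=
    m.2 ▸ Multiset.le_sum_of_mem (Multiset.mem_map_of_mem s ha)
  refine Finite.of_injective
    (fun m (a : {a : α // s a ≤ n}) => (⟨m.1.count a.1, hcount m a⟩ : Fin (n + 1)))
    fun m m' h => Subtype.ext (Multiset.ext.mpr fun a => ?_)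
  by_cases ha : s a ≤ n
  · exact congrArg Fin.val (congrFun h ⟨a, ha⟩)
  · rw [Multiset.count_eq_zero_of_notMem (mt (hsize m a) ha),
      Multiset.count_eq_zero_of_notMem (mt (hsize m' a) ha)]

theorem card_multiset_sum_map_eq_zero (hpos : ∀ a, 0 < s a) :
    Nat.card {m : Multiset α // (m.map s).sum = 0} = 1 := by
  have h : ∀ m : Multiset α, (m.map s).sum = 0 ↔ m = 0 := fun m => by
    simp [Multiset.sum_eq_zero_iff, Multiset.eq_zero_iff_forall_notMem, (hpos _).ne']
  rw [Nat.card_congr (Equiv.subtypeEquivRight h), Nat.card_unique]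

section Marks

variable [DecidableEq α]

/-- `(a, e, i)` marks the `i`-th unit of size of the `e`-th copy (counting from `0`) of `a`
in `m`. -/
def IsMark (m : Multiset α) (c : α × ℕ × ℕ) : Prop :=
  c.2.1 < m.count c.1 ∧ c.2.2 < s c.1

def marksEquiv (m : Multiset α) :
    {c // IsMark s m c} ≃ Σ a : m.toFinset, Fin (m.count a.1) × Fin (s a) where
  toFun c :=
    ⟨⟨c.1.1, Multiset.mem_toFinset.mpr (Multiset.count_pos.mp (Nat.zero_lt_of_lt c.2.1))⟩,
      ⟨c.1.2.1, c.2.1⟩, ⟨c.1.2.2, c.2.2⟩⟩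
  invFun x := ⟨(x.1, x.2.1, x.2.2), x.2.1.2, x.2.2.2⟩
  left_inv _ := rfl
  right_inv _ := rfl

instance (m : Multiset α) : Finite {c // IsMark s m c} :=
  .of_equiv _ (marksEquiv s m).symm

theorem card_marks (m : Multiset α) : Nat.card {c // IsMark s m c} = (m.map s).sum := by
  rw [Nat.card_congr (marksEquiv s m), Nat.card_sigma, sum_multiset_map_count]
  simp only [Nat.card_eq_fintype_card, Fintype.card_prod, Fintype.card_fin, smul_eq_mul]
  exact sum_coe_sort m.toFinset fun a => m.count a * s a

end Marks

/-- `(a, e, i)` stands for `e + 1` copies of `a`, the `i`-th unit of size of the last one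
marked. -/
abbrev MarkedCycle : Type _ := {c : α × ℕ × ℕ // c.2.2 < s c.1}

def MarkedCycle.size (c : MarkedCycle s) : ℕ := (c.1.2.1 + 1) * s c.1.1

def markedEquivMarkedCycleProd [DecidableEq α] :
    {x : Multiset α × (α × ℕ × ℕ) // IsMark s x.1 x.2} ≃
      MarkedCycle s × Multiset α where
  toFun
    | ⟨(m, a, e, i), _, hi⟩ => (⟨(a, e, i), hi⟩, m - Multiset.replicate (e + 1) a)
  invFun
    | (⟨(a, e, i), hi⟩, m) => ⟨(m + Multiset.replicate (e + 1) a, a, e, i), by simp, hi⟩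
  left_inv := by
    rintro ⟨⟨m, a, e, i⟩, he, hi⟩
    have : Multiset.replicate (e + 1) a ≤ m := Multiset.le_count_iff_replicate_le.mp he
    exact Subtype.ext (Prod.ext (tsub_add_cancel_of_le this) rfl)
  right_inv := by
    rintro ⟨⟨⟨a, e, i⟩, hi⟩, m⟩
    exact Prod.ext rfl (add_tsub_cancel_right _ _)

theorem size_markedEquivMarkedCycleProd [DecidableEq α]
    (x : {x : Multiset α × (α × ℕ × ℕ) // IsMark s x.1 x.2}) :
    (markedEquivMarkedCycleProd s x).1.size + ((markedEquivMarkedCycleProd s x).2.map s).sum =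
      (x.1.1.map s).sum := by
  obtain ⟨⟨m, a, e, i⟩, he, hi⟩ := x
  dsimp only at he
  obtain ⟨m', rfl⟩ := Multiset.le_iff_exists_add.mp (Multiset.le_count_iff_replicate_le.mp he)
  change (e + 1) * s a +
      ((Multiset.replicate (e + 1) a + m' - Multiset.replicate (e + 1) a).map s).sum =
    ((Multiset.replicate (e + 1) a + m').map s).sum
  rw [add_tsub_cancel_left, Multiset.map_add, Multiset.sum_add, Multiset.map_replicate,
    Multiset.sum_replicate, smul_eq_mul]

def markedCycleFiberEquiv (k : ℕ) :
    {c : MarkedCycle s // c.size = k} ≃ Σ d : k.divisors, {a // s a = d} × Fin d where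
  toFun c := ⟨⟨s c.1.1.1, Nat.mem_divisors.mpr ⟨Dvd.intro_left _ c.2, by
      rw [← c.2]; exact Nat.mul_ne_zero (Nat.succ_ne_zero _) (Nat.ne_zero_of_lt c.1.2)⟩⟩,
    ⟨c.1.1.1, rfl⟩, ⟨c.1.1.2.2, c.1.2⟩⟩
  invFun x := ⟨⟨(x.2.1.1, k / x.1 - 1, x.2.2), by rw [x.2.1.2]; exact x.2.2.2⟩, by
    obtain ⟨⟨d, hd⟩, ⟨a, ha⟩, i⟩ := x
    dsimp only at ha
    subst ha
    have hpos : 0 < k / s a := Nat.div_pos (Nat.divisor_le hd) (Nat.pos_of_mem_divisors hd)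
    rw [MarkedCycle.size, Nat.sub_add_cancel hpos,
      Nat.div_mul_cancel (Nat.dvd_of_mem_divisors hd)]⟩
  left_inv := by
    rintro ⟨⟨⟨a, e, i⟩, hi⟩, rfl⟩
    have : 0 < s a := Nat.zero_lt_of_lt hi
    simp [MarkedCycle.size, Nat.mul_div_cancel _ this]
  right_inv := by
    rintro ⟨⟨d, hd⟩, ⟨a, ha⟩, i⟩
    dsimp only at ha
    subst ha
    rfl

theorem finite_markedCycle_size_eq (hfin : ∀ n, Finite {a : α // s a = n}) (k : ℕ) :
    Finite {c : MarkedCycle s // c.size = k} :=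
  .of_equiv _ (markedCycleFiberEquiv s k).symm

theorem genFun_markedCycle (hfin : ∀ n, Finite {a : α // s a = n}) :
    genFun (MarkedCycle.size s) = X * d⁄dX ℚ (dsum (genFun s)) := by
  ext k
  rw [coeff_X_mul_derivative_dsum]
  simp only [genFun, coeff_mk]
  rw [Nat.card_congr (markedCycleFiberEquiv s k), Nat.card_sigma, ← sum_coe_sort k.divisors]
  push_cast [Nat.card_prod, Nat.card_eq_fintype_card, Fintype.card_fin]
  exact sum_congr rfl fun d _ => mul_comm _ _

end Multisets

/-- The generating function for all finite multisets, counted by total size, equals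
`exp(∑_{k≥1} A(x^k)/k)`, provided every element has positive size. -/
theorem multiset_genFun_eq_exp {α : Type*} (s : α → ℕ)
    (hfin : ∀ n : ℕ, Finite {a : α // s a = n}) (hpos : ∀ a : α, 0 < s a) :
    (PowerSeries.mk fun n => (Nat.card {m : Multiset α // (m.map s).sum = n} : ℚ))
      = expPS (dsum (genFun s)) := by
  classical
  set F := genFun fun m : Multiset α => (m.map s).sum
  have hM := finite_multiset_sum_map_eq s hfin hpos
  have hF : X * d⁄dX ℚ F = X * d⁄dX ℚ (dsum (genFun s)) * F := by
    rw [← genFun_markedCycle s hfin, ← genFun_prod (finite_markedCycle_size_eq s hfin) hM,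
      ← genFun_pointed _ (IsMark s) hM (card_marks s)]
    exact genFun_congr (markedEquivMarkedCycleProd s) (size_markedEquivMarkedCycleProd s)
  refine eq_of_X_mul_derivative_eq hF ?_ (by simp) ?_
  · rw [derivative_expPS (constantCoeff_dsum _), mul_assoc]
  · rw [constantCoeff_expPS, ← coeff_zero_eq_constantCoeff, coeff_mk,
      card_multiset_sum_map_eq_zero s hpos, Nat.cast_one]
end

section
/- Dissymmetry theorem for trees: for any finite tree T, there is a bijection from the disjoint union of the set of vertices of T and the set of edges of T to the disjoint union of {T} and the set of incident vertex–edge pairs of T, which is natural with respect to isomorphisms of trees (i.e., commutes with the action of any isomorphism). -/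
/-!
Cutting an edge `vw` of a tree splits it into the branch of `v` and the branch of `w`; call the
flag `(v, vw)` heavy when the branch of `w` holds at least half of the vertices. A vertex carries
at most one heavy flag and an edge at most one light flag, and every flag is the heavy flag of its
vertex or the light flag of its edge. Send each vertex to its heavy flag and each edge to its light
flag. At a vertex minimising the total distance to all others (a centroid) either no flag is
heavy, or the heavy flag cuts the tree into two halves and its edge carries no light flag; that
vertex or edge is sent to the extra point. The map is therefore surjective, hence bijective as
`|V| + |E| = 1 + 2|E|`, and it is natural because isomorphisms preserve distances.
-/

open SimpleGraph

/-- An incident vertex–edge pair of a graph. -/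
def TreeFlag {V : Type*} (G : SimpleGraph V) : Type _ :=
  {p : V × G.edgeSet // p.1 ∈ (p.2 : Sym2 V)}

/-- The action of a graph isomorphism on incident vertex–edge pairs. -/
def flagMap {V₁ V₂ : Type*} {G₁ : SimpleGraph V₁} {G₂ : SimpleGraph V₂}
    (α : G₁ ≃g G₂) (p : TreeFlag G₁) : TreeFlag G₂ :=
  ⟨(α p.1.1, α.mapEdgeSet p.1.2), by
    show α p.1.1 ∈ Sym2.map α (p.1.2 : Sym2 V₁)
    rw [Sym2.mem_map]
    exact ⟨p.1.1, p.2, rfl⟩⟩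

namespace SimpleGraph

variable {V V' : Type*} {G : SimpleGraph V} {G' : SimpleGraph V'}

theorem Iso.dist_map (α : G ≃g G') (u v : V) : G'.dist (α u) (α v) = G.dist u v := by
  rw [dist_eq_sInf, dist_eq_sInf]
  congr 1
  ext n
  constructor
  · rintro ⟨p, rfl⟩
    exact ⟨(p.map α.symm.toHom).copy (by simp) (by simp), by simp⟩
  · rintro ⟨p, rfl⟩
    exact ⟨p.map α.toHom, by simp⟩

/-- For an edge `vw` of a tree, `G.branch v w` is the component of `w` once the edge is cut. -/
def branch (G : SimpleGraph V) (v w : V) : Set V := {u | G.dist u w < G.dist u v}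

theorem Iso.image_branch (α : G ≃g G') (v w : V) :
    α '' G.branch v w = G'.branch (α v) (α w) := by
  ext u'
  obtain ⟨u, rfl⟩ := α.surjective u'
  rw [α.injective.mem_set_image]
  simp only [branch, Set.mem_ofPred_eq, α.dist_map]

theorem IsTree.mem_branch_iff (hG : G.IsTree) {u v w : V} (hadj : G.Adj v w) :
    u ∈ G.branch v w ↔ G.dist u v = G.dist u w + 1 := by
  have := hG.dist_eq_dist_add_one_of_adj u hadj
  simp only [branch, Set.mem_ofPred_eq]
  omega

theorem IsTree.ncard_branch_add_ncard_branch [Finite V] (hG : G.IsTree) {v w : V}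
    (hadj : G.Adj v w) : (G.branch v w).ncard + (G.branch w v).ncard = Nat.card V := by
  have hdisj : Disjoint (G.branch v w) (G.branch w v) :=
    Set.disjoint_left.2 fun _ h₁ h₂ => lt_asymm (α := ℕ) h₁ h₂
  have hunion : G.branch v w ∪ G.branch w v = Set.univ := by
    ext u
    have := hG.dist_ne_of_adj u hadj
    simp only [branch, Set.mem_union, Set.mem_ofPred_eq, Set.mem_univ, iff_true]
    omega
  rw [← Set.ncard_union_eq hdisj, hunion, Set.ncard_univ]

theorem IsTree.eq_of_mem_branch_of_mem_branch (hG : G.IsTree) {u v w₁ w₂ : V}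
    (h₁ : G.Adj v w₁) (h₂ : G.Adj v w₂) (hu₁ : u ∈ G.branch v w₁) (hu₂ : u ∈ G.branch v w₂) :
    w₁ = w₂ := by
  rw [hG.mem_branch_iff h₁] at hu₁
  rw [hG.mem_branch_iff h₂] at hu₂
  obtain ⟨p₁, -, hl₁⟩ := hG.connected.exists_path_of_dist u w₁
  obtain ⟨p₂, -, hl₂⟩ := hG.connected.exists_path_of_dist u w₂
  have hq₁ : (p₁.concat h₁.symm).IsPath :=
    Walk.isPath_of_length_eq_dist _ (by rw [Walk.length_concat, hl₁, hu₁])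
  have hq₂ : (p₂.concat h₂.symm).IsPath :=
    Walk.isPath_of_length_eq_dist _ (by rw [Walk.length_concat, hl₂, hu₂])
  exact (Walk.concat_inj ((hG.existsUnique_path u v).unique hq₁ hq₂)).1

theorem IsTree.ncard_branch_add_ncard_branch_lt [Finite V] (hG : G.IsTree) {v w₁ w₂ : V}
    (h₁ : G.Adj v w₁) (h₂ : G.Adj v w₂) (hne : w₁ ≠ w₂) :
    (G.branch v w₁).ncard + (G.branch v w₂).ncard < Nat.card V := by
  have hdisj : Disjoint (G.branch v w₁) (G.branch v w₂) :=
    Set.disjoint_left.2 fun _ hu₁ hu₂ => hne (hG.eq_of_mem_branch_of_mem_branch h₁ h₂ hu₁ hu₂)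
  have hv : v ∉ G.branch v w₁ ∪ G.branch v w₂ := by simp [branch]
  rw [← Set.ncard_union_eq hdisj, ← Set.ncard_univ]
  exact Set.ncard_lt_ncard (Set.ssubset_univ_iff.2 fun h => hv (h ▸ Set.mem_univ v))

/-- Moving from `v` to a neighbour `w` brings the branch of `w` one step closer and pushes the
branch of `v` one step away. -/
theorem IsTree.sum_dist_add_ncard_branch [Fintype V] (hG : G.IsTree) {v w : V}
    (hadj : G.Adj v w) :
    ∑ u, G.dist u v + (G.branch w v).ncard = ∑ u, G.dist u w + (G.branch v w).ncard := by
  classical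
  simp only [branch, Set.ncard_eq_toFinset_card', Set.toFinset_ofPred, Finset.card_filter,
    ← Finset.sum_add_distrib]
  refine Finset.sum_congr rfl fun u _ => ?_
  have := hG.dist_eq_dist_add_one_of_adj u hadj
  split_ifs <;> omega

theorem IsTree.exists_forall_adj_two_mul_ncard_branch_le [Finite V] (hG : G.IsTree) :
    ∃ v, ∀ w, G.Adj v w → 2 * (G.branch v w).ncard ≤ Nat.card V := by
  have := Fintype.ofFinite V
  obtain ⟨v, -, hmin⟩ := Finset.exists_min_image Finset.univ (fun v => ∑ u, G.dist u v)
    (Finset.univ_nonempty_iff.2 hG.connected.nonempty)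
  refine ⟨v, fun w hadj => ?_⟩
  have := hmin w (Finset.mem_univ w)
  have := hG.sum_dist_add_ncard_branch hadj
  have := hG.ncard_branch_add_ncard_branch hadj
  omega

theorem IsTree.natCard_edgeSet_add_one [Finite V] (hG : G.IsTree) :
    Nat.card G.edgeSet + 1 = Nat.card V := by
  classical
  have := Fintype.ofFinite V
  rw [Nat.card_eq_fintype_card, Nat.card_eq_fintype_card, ← Set.toFinset_card]
  exact hG.card_edgeFinset

end SimpleGraph

section ElemOrUnit

variable {α β : Type*} {s : Set α}

open Classical in
noncomputable def elemOrUnit (s : Set α) : Unit ⊕ α :=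
  if h : s.Nonempty then .inr h.some else .inl ()

theorem elemOrUnit_empty : elemOrUnit (∅ : Set α) = .inl () := by
  simp [elemOrUnit]

theorem elemOrUnit_singleton (a : α) : elemOrUnit {a} = .inr a := by
  rw [elemOrUnit, dif_pos (Set.singleton_nonempty a)]
  exact congrArg Sum.inr (Set.singleton_nonempty a).some_mem

theorem Set.Subsingleton.elemOrUnit_eq_inr (hs : s.Subsingleton) {a : α} (ha : a ∈ s) :
    elemOrUnit s = .inr a := by
  rw [hs.eq_singleton_of_mem ha, elemOrUnit_singleton]

theorem Set.Subsingleton.elemOrUnit_image (hs : s.Subsingleton) (f : α → β) :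
    elemOrUnit (f '' s) = Sum.map id f (elemOrUnit s) := by
  rcases hs.eq_empty_or_singleton with rfl | ⟨a, rfl⟩
  · simp only [Set.image_empty, elemOrUnit_empty, Sum.map_inl, id]
  · simp only [Set.image_singleton, elemOrUnit_singleton, Sum.map_inr]

end ElemOrUnit

namespace TreeFlag

variable {V : Type*} {G : SimpleGraph V}

def vertex (p : TreeFlag G) : V := p.1.1

def edge (p : TreeFlag G) : G.edgeSet := p.1.2

noncomputable def otherEnd (p : TreeFlag G) : V := Sym2.Mem.other p.2

theorem edge_eq (p : TreeFlag G) : (p.edge : Sym2 V) = s(p.vertex, p.otherEnd) :=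
  (Sym2.other_spec p.2).symm

theorem adj_otherEnd (p : TreeFlag G) : G.Adj p.vertex p.otherEnd := by
  rw [← mem_edgeSet, ← p.edge_eq]
  exact p.edge.2

theorem ext_of_vertex_otherEnd {p q : TreeFlag G} (hv : p.vertex = q.vertex)
    (ho : p.otherEnd = q.otherEnd) : p = q :=
  Subtype.ext <| Prod.ext hv <| Subtype.ext <| by
    rw [← edge, ← edge, edge_eq, edge_eq, hv, ho]

theorem eq_or_eq_swap_of_edge_eq {p q : TreeFlag G} (h : p.edge = q.edge) :
    (q.vertex = p.vertex ∧ q.otherEnd = p.otherEnd) ∨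
      (q.vertex = p.otherEnd ∧ q.otherEnd = p.vertex) := by
  have h' := congrArg Subtype.val h
  rw [edge_eq, edge_eq, Sym2.eq_iff] at h'
  tauto

noncomputable def equivDart : TreeFlag G ≃ G.Dart where
  toFun p := ⟨(p.vertex, p.otherEnd), p.adj_otherEnd⟩
  invFun d := ⟨(d.fst, ⟨d.edge, d.edge_mem⟩), Sym2.mem_mk_left _ _⟩
  left_inv p := Subtype.ext <| Prod.ext rfl <| Subtype.ext p.edge_eq.symm
  right_inv _ := Dart.ext _ _ <| Prod.ext rfl <| Sym2.congr_right.1 <| Sym2.other_spec _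

instance [Finite V] : Finite (TreeFlag G) :=
  inferInstanceAs (Finite {p : V × G.edgeSet // p.1 ∈ (p.2 : Sym2 V)})

theorem natCard_eq_two_mul_natCard_edgeSet [Finite V] :
    Nat.card (TreeFlag G) = 2 * Nat.card G.edgeSet := by
  classical
  have := Fintype.ofFinite V
  rw [Nat.card_congr equivDart, Nat.card_eq_fintype_card, dart_card_eq_twice_card_edges,
    Nat.card_eq_fintype_card, ← Set.toFinset_card]
  rfl

/-- A flag is heavy when the branch beyond its edge holds at least half of the vertices; heavy
flags point towards the centroid of the tree. -/
def IsHeavy (p : TreeFlag G) : Prop :=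
  Nat.card V ≤ 2 * (G.branch p.vertex p.otherEnd).ncard

variable (G) in
def heavyAt (v : V) : Set (TreeFlag G) := {p | p.vertex = v ∧ p.IsHeavy}

variable (G) in
def lightOn (e : G.edgeSet) : Set (TreeFlag G) := {p | p.edge = e ∧ ¬p.IsHeavy}

theorem subsingleton_heavyAt [Finite V] (hG : G.IsTree) (v : V) :
    (heavyAt G v).Subsingleton := by
  rintro p ⟨rfl, hp⟩ q ⟨hv, hq⟩
  refine ext_of_vertex_otherEnd hv.symm (by_contra fun hne => ?_)
  have := hG.ncard_branch_add_ncard_branch_lt p.adj_otherEnd (hv ▸ q.adj_otherEnd) hne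
  rw [IsHeavy, hv] at hq
  rw [IsHeavy] at hp
  omega

theorem subsingleton_lightOn [Finite V] (hG : G.IsTree) (e : G.edgeSet) :
    (lightOn G e).Subsingleton := by
  rintro p ⟨rfl, hp⟩ q ⟨he, hq⟩
  rcases eq_or_eq_swap_of_edge_eq he.symm with ⟨hv, ho⟩ | ⟨hv, ho⟩
  · exact (ext_of_vertex_otherEnd hv ho).symm
  · have := hG.ncard_branch_add_ncard_branch p.adj_otherEnd
    rw [IsHeavy, hv, ho] at hq
    rw [IsHeavy] at hp
    omega

theorem exists_heavyAt_eq_empty_or_lightOn_eq_empty [Finite V] (hG : G.IsTree) :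
    (∃ v, heavyAt G v = ∅) ∨ ∃ e, lightOn G e = ∅ := by
  obtain ⟨v, hv⟩ := hG.exists_forall_adj_two_mul_ncard_branch_le
  rcases (heavyAt G v).eq_empty_or_nonempty with h | ⟨p, rfl, hp⟩
  · exact .inl ⟨v, h⟩
  refine .inr ⟨p.edge, Set.eq_empty_of_forall_notMem fun q ⟨hq, hlight⟩ => hlight ?_⟩
  have := hv _ p.adj_otherEnd
  have := hG.ncard_branch_add_ncard_branch p.adj_otherEnd
  rw [IsHeavy] at hp ⊢
  rcases eq_or_eq_swap_of_edge_eq hq.symm with ⟨hv', ho⟩ | ⟨hv', ho⟩ <;> rw [hv', ho] <;> omega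

section Map

variable {V' : Type*} {G' : SimpleGraph V'} (α : G ≃g G')

theorem vertex_flagMap (p : TreeFlag G) : (flagMap α p).vertex = α p.vertex := rfl

theorem edge_flagMap (p : TreeFlag G) : (flagMap α p).edge = α.mapEdgeSet p.edge := rfl

theorem otherEnd_flagMap (p : TreeFlag G) : (flagMap α p).otherEnd = α p.otherEnd := by
  refine Sym2.congr_right.1 (?_ : s(α p.vertex, _) = s(α p.vertex, α p.otherEnd))
  rw [← vertex_flagMap, ← edge_eq, edge_flagMap]
  change Sym2.map α (p.edge : Sym2 V) = _
  rw [edge_eq, Sym2.map_mk]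
  rfl

theorem isHeavy_flagMap (p : TreeFlag G) : (flagMap α p).IsHeavy ↔ p.IsHeavy := by
  rw [IsHeavy, IsHeavy, vertex_flagMap, otherEnd_flagMap, ← α.image_branch,
    Set.ncard_image_of_injective _ α.injective, Nat.card_congr α.toEquiv]

theorem flagMap_symm_flagMap (p : TreeFlag G) : flagMap α.symm (flagMap α p) = p :=
  ext_of_vertex_otherEnd (α.symm_apply_apply _) <| by
    rw [otherEnd_flagMap, otherEnd_flagMap, α.symm_apply_apply]

theorem flagMap_bijective : Function.Bijective (flagMap α) :=
  Function.bijective_iff_has_inverse.2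
    ⟨flagMap α.symm, flagMap_symm_flagMap α, flagMap_symm_flagMap α.symm⟩

theorem image_heavyAt (v : V) : flagMap α '' heavyAt G v = heavyAt G' (α v) := by
  ext q
  obtain ⟨p, rfl⟩ := (flagMap_bijective α).surjective q
  rw [(flagMap_bijective α).injective.mem_set_image]
  simp only [heavyAt, Set.mem_ofPred_eq, vertex_flagMap, isHeavy_flagMap, α.injective.eq_iff]

theorem image_lightOn (e : G.edgeSet) :
    flagMap α '' lightOn G e = lightOn G' (α.mapEdgeSet e) := by
  ext q
  obtain ⟨p, rfl⟩ := (flagMap_bijective α).surjective q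
  rw [(flagMap_bijective α).injective.mem_set_image]
  simp only [lightOn, Set.mem_ofPred_eq, edge_flagMap, isHeavy_flagMap,
    α.mapEdgeSet.injective.eq_iff]

end Map

end TreeFlag

open TreeFlag

noncomputable def dissymmetryMap {V : Type*} (G : SimpleGraph V) :
    V ⊕ G.edgeSet → Unit ⊕ TreeFlag G :=
  Sum.elim (fun v => elemOrUnit (heavyAt G v)) (fun e => elemOrUnit (lightOn G e))

section Dissymmetry

variable {V : Type*} {G : SimpleGraph V} [Finite V]

theorem dissymmetryMap_surjective (hG : G.IsTree) : Function.Surjective (dissymmetryMap G) := by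
  rintro (⟨⟩ | p)
  · rcases exists_heavyAt_eq_empty_or_lightOn_eq_empty hG with ⟨v, hv⟩ | ⟨e, he⟩
    · exact ⟨.inl v, by rw [dissymmetryMap, Sum.elim_inl, hv, elemOrUnit_empty]⟩
    · exact ⟨.inr e, by rw [dissymmetryMap, Sum.elim_inr, he, elemOrUnit_empty]⟩
  · by_cases hp : p.IsHeavy
    · exact ⟨.inl p.vertex, (subsingleton_heavyAt hG _).elemOrUnit_eq_inr ⟨rfl, hp⟩⟩
    · exact ⟨.inr p.edge, (subsingleton_lightOn hG _).elemOrUnit_eq_inr ⟨rfl, hp⟩⟩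

theorem dissymmetryMap_bijective (hG : G.IsTree) : Function.Bijective (dissymmetryMap G) := by
  refine (Nat.bijective_iff_surjective_and_card _).2 ⟨dissymmetryMap_surjective hG, ?_⟩
  have := hG.natCard_edgeSet_add_one
  rw [Nat.card_sum, Nat.card_sum, natCard_eq_two_mul_natCard_edgeSet,
    Nat.card_unique (α := Unit)]
  omega

theorem dissymmetryMap_natural {V' : Type*} {G' : SimpleGraph V'} (hG : G.IsTree)
    (α : G ≃g G') (x : V ⊕ G.edgeSet) :
    dissymmetryMap G' (Sum.map α α.mapEdgeSet x) =
      Sum.map id (flagMap α) (dissymmetryMap G x) := by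
  rcases x with v | e
  · simp only [dissymmetryMap, Sum.map_inl, Sum.elim_inl, ← image_heavyAt,
      (subsingleton_heavyAt hG v).elemOrUnit_image]
  · simp only [dissymmetryMap, Sum.map_inr, Sum.elim_inr, ← image_lightOn,
      (subsingleton_lightOn hG e).elemOrUnit_image]

end Dissymmetry

/-- Dissymmetry theorem for trees: for every finite tree `T` there is a bijection from
`(vertices of T) ⊕ (edges of T)` to `{T} ⊕ (incident vertex–edge pairs of T)`, and the
family of bijections is natural with respect to isomorphisms of trees. -/
theorem dissymmetry_theorem :
    ∃ Φ : ∀ (V : Type) (G : SimpleGraph V), Fintype V → G.IsTree →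
        ((V ⊕ G.edgeSet) ≃ (Unit ⊕ TreeFlag G)),
      ∀ (V₁ V₂ : Type) (G₁ : SimpleGraph V₁) (G₂ : SimpleGraph V₂)
        (h₁ : Fintype V₁) (h₂ : Fintype V₂) (t₁ : G₁.IsTree) (t₂ : G₂.IsTree)
        (α : G₁ ≃g G₂) (x : V₁ ⊕ G₁.edgeSet),
        Φ V₂ G₂ h₂ t₂ (Sum.map (⇑α) (⇑α.mapEdgeSet) x)
          = Sum.map id (flagMap α) (Φ V₁ G₁ h₁ t₁ x) :=
  ⟨fun _ G _ hG => .ofBijective (dissymmetryMap G) (dissymmetryMap_bijective hG),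
    fun _ _ _ _ _ _ t₁ _ α x => dissymmetryMap_natural t₁ α x⟩
end

section
/- For any finite tree T with v vertices and e edges and automorphism group G, the number of G-orbits of vertices plus the number of G-orbits of edges equals 1 plus the number of G-orbits of incident vertex–edge pairs. -/
open SimpleGraph

/-- Orbits of the automorphism group on vertices. -/
def vertexOrbitSetoid {V : Type*} (G : SimpleGraph V) : Setoid V where
  r u v := ∃ φ : G ≃g G, φ u = v
  iseqv := by
    refine ⟨fun v => ⟨Iso.refl, rfl⟩, fun ⟨φ, h⟩ => ⟨φ.symm, ?_⟩,
      fun ⟨φ, h⟩ ⟨ψ, h'⟩ => ⟨φ.trans ψ, ?_⟩⟩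
    · rw [← h]; exact φ.symm_apply_apply _
    · show ψ (φ _) = _; rw [h, h']

/-- Orbits of the automorphism group on edges. -/
def edgeOrbitSetoid {V : Type*} (G : SimpleGraph V) : Setoid G.edgeSet where
  r e f := ∃ φ : G ≃g G, Sym2.map φ (e : Sym2 V) = (f : Sym2 V)
  iseqv := by
    refine ⟨fun e => ⟨Iso.refl, congrFun Sym2.map_id' _⟩, fun ⟨φ, h⟩ => ⟨φ.symm, ?_⟩,
      fun ⟨φ, h⟩ ⟨ψ, h'⟩ => ⟨φ.trans ψ, ?_⟩⟩
    · rw [← h, Sym2.map_map]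
      have hid : (⇑φ.symm ∘ ⇑φ) = id := by funext x; simp
      rw [hid, Sym2.map_id]; rfl
    · rw [← h', ← h, Sym2.map_map]; rfl

/-- Orbits of the automorphism group on incident vertex–edge pairs. -/
def flagOrbitSetoid {V : Type*} (G : SimpleGraph V) :
    Setoid {p : V × G.edgeSet // p.1 ∈ (p.2 : Sym2 V)} where
  r p q := ∃ φ : G ≃g G,
    φ p.1.1 = q.1.1 ∧ Sym2.map φ (p.1.2 : Sym2 V) = (q.1.2 : Sym2 V)
  iseqv := by
    refine ⟨fun p => ⟨Iso.refl, rfl, congrFun Sym2.map_id' _⟩,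
      fun ⟨φ, h1, h2⟩ => ⟨φ.symm, ?_, ?_⟩,
      fun ⟨φ, h1, h2⟩ ⟨ψ, h1', h2'⟩ => ⟨φ.trans ψ, ?_, ?_⟩⟩
    · rw [← h1]; exact φ.symm_apply_apply _
    · rw [← h2, Sym2.map_map]
      have hid : (⇑φ.symm ∘ ⇑φ) = id := by funext x; simp
      rw [hid, Sym2.map_id]; rfl
    · show ψ (φ _) = _; rw [h1, h1']
    · rw [← h2', ← h2, Sym2.map_map]; rfl

/-!
Take the eccentricity `h` as a height function. In a tree a vertex `v` has at most one neighbour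
`w` with `h w ≤ h v`, namely the first step from `v` towards a vertex farthest from `v`. Send a
flag `(v, e)` to `v` if the other end of `e` is not higher than `v`, and to `e` otherwise. This
map is injective and commutes with automorphisms, and it misses exactly the critical points: the
vertices lower than all their neighbours and the edges whose ends have the same height. A tree has
`2|E| = 2|V| - 2` flags, so there is exactly one critical point. It is therefore fixed by every
automorphism, and on orbits the map misses exactly one orbit.
-/

theorem Nat.card_eq_card_add_one_of_range_eq_compl_singleton {A B : Type*} [Finite B]
    {f : A → B} (hf : Function.Injective f) {b : B} (hrange : Set.range f = {b}ᶜ) :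
    Nat.card B = Nat.card A + 1 := by
  classical
  rw [← Nat.card_congr (Equiv.optionSubtypeNe b), Finite.card_option,
    Nat.card_congr ((Equiv.ofInjective f hf).trans (Equiv.setCongr hrange))]
  rfl

namespace SimpleGraph

variable {V W : Type*} {G : SimpleGraph V} {G' : SimpleGraph W}

theorem Hom.edist_le (f : G →g G') (u v : V) : G'.edist (f u) (f v) ≤ G.edist u v := by
  rcases eq_or_ne (G.edist u v) ⊤ with h | h
  · simp [h]
  obtain ⟨p, hp⟩ := exists_walk_of_edist_ne_top h
  rw [← hp, ← p.length_map f]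
  exact SimpleGraph.edist_le _

theorem Iso.edist_eq (φ : G ≃g G') (u v : V) : G'.edist (φ u) (φ v) = G.edist u v :=
  le_antisymm (Hom.edist_le φ.toHom u v) (by simpa using Hom.edist_le φ.symm.toHom (φ u) (φ v))

theorem Iso.eccent_eq (φ : G ≃g G') (u : V) : G'.eccent (φ u) = G.eccent u := by
  simp only [eccent_def]
  rw [← φ.toEquiv.iSup_comp]
  exact iSup_congr fun v => φ.edist_eq u v

theorem IsTree.eq_of_adj_of_dist_eq_add_one (hG : G.IsTree) {u v w₁ w₂ : V}
    (h₁ : G.Adj w₁ v) (h₂ : G.Adj w₂ v) (hd₁ : G.dist u v = G.dist u w₁ + 1)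
    (hd₂ : G.dist u v = G.dist u w₂ + 1) : w₁ = w₂ := by
  obtain ⟨p₁, hp₁⟩ := hG.connected.exists_walk_length_eq_dist u w₁
  obtain ⟨p₂, hp₂⟩ := hG.connected.exists_walk_length_eq_dist u w₂
  have hq₁ : (p₁.concat h₁).IsPath := Walk.isPath_of_length_eq_dist _ (by simp [hp₁, hd₁])
  have hq₂ : (p₂.concat h₂).IsPath := Walk.isPath_of_length_eq_dist _ (by simp [hp₂, hd₂])
  have := (hG.isAcyclic.subsingleton_path u v).elim ⟨_, hq₁⟩ ⟨_, hq₂⟩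
  exact (Walk.concat_inj (congrArg Subtype.val this)).1

abbrev Flag (G : SimpleGraph V) := {p : V × G.edgeSet // p.1 ∈ (p.2 : Sym2 V)}

def Flag.map (φ : G ≃g G) (p : G.Flag) : G.Flag :=
  ⟨(φ p.1.1, φ.mapEdgeSet p.1.2), Sym2.mem_map.2 ⟨p.1.1, p.2, rfl⟩⟩

theorem Flag.mk_eq_mk_iff {p q : G.Flag} :
    (⟦p⟧ : Quotient (flagOrbitSetoid G)) = ⟦q⟧ ↔ ∃ φ : G ≃g G, p.map φ = q := by
  simp only [Quotient.eq, Flag.map, Subtype.ext_iff, Prod.ext_iff, Iso.mapEdgeSet_apply,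
    Hom.mapEdgeSet_coe]
  exact Iff.rfl

def Dart.toFlag (d : G.Dart) : G.Flag :=
  ⟨(d.fst, ⟨d.edge, d.edge_mem⟩), Sym2.mem_mk_left _ _⟩

theorem Dart.toFlag_bijective : Function.Bijective (Dart.toFlag (G := G)) := by
  refine ⟨fun d d' hd => ?_, fun ⟨⟨v, e⟩, hv⟩ => ?_⟩
  · have hfst : d.fst = d'.fst := congrArg (fun p : G.Flag => p.1.1) hd
    have hedge : s(d.fst, d.snd) = s(d'.fst, d'.snd) :=
      congrArg (fun p : G.Flag => (p.1.2 : Sym2 V)) hd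
    rw [hfst] at hedge
    exact Dart.ext _ _ (Prod.ext hfst (Sym2.congr_right.1 hedge))
  · obtain ⟨w, hw⟩ := Sym2.mem_iff_exists.1 hv
    have hadj : G.Adj v w := by rw [← mem_edgeSet, ← hw]; exact e.2
    exact ⟨⟨(v, w), hadj⟩, by simp [toFlag, Dart.edge, ← hw]⟩

theorem card_flag [Finite V] : Nat.card G.Flag = 2 * Nat.card G.edgeSet := by
  classical
  have := Fintype.ofFinite V
  rw [← Nat.card_congr (Equiv.ofBijective _ Dart.toFlag_bijective), Nat.card_eq_fintype_card,
    dart_card_eq_twice_card_edges, edgeFinset_card, Nat.card_eq_fintype_card]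

def orbitClass (x : V ⊕ G.edgeSet) :
    Quotient (vertexOrbitSetoid G) ⊕ Quotient (edgeOrbitSetoid G) :=
  Sum.map (Quotient.mk _) (Quotient.mk _) x

theorem orbitClass_surjective : Function.Surjective (orbitClass (G := G)) :=
  Sum.map_surjective.2 ⟨Quotient.mk_surjective, Quotient.mk_surjective⟩

theorem orbitClass_eq_iff {x y : V ⊕ G.edgeSet} :
    orbitClass x = orbitClass y ↔ ∃ φ : G ≃g G, Sum.map φ φ.mapEdgeSet x = y := by
  rcases x with u | e <;> rcases y with v | f <;> simp [orbitClass, Quotient.eq, Subtype.ext_iff]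
  all_goals exact Iff.rfl

section Height

variable {α : Type*} [LinearOrder α]

def UniqueDescent (G : SimpleGraph V) (h : V → α) : Prop :=
  ∀ ⦃v w₁ w₂⦄, G.Adj v w₁ → G.Adj v w₂ → h w₁ ≤ h v → h w₂ ≤ h v → w₁ = w₂

theorem IsTree.uniqueDescent_eccent [Finite V] (hG : G.IsTree) : G.UniqueDescent G.eccent := by
  intro v w₁ w₂ h₁ h₂ he₁ he₂
  obtain ⟨x, hx⟩ := G.exists_edist_eq_eccent_of_finite v
  have toward {w : V} (h : G.Adj v w) (he : G.eccent w ≤ G.eccent v) :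
      G.dist x v = G.dist x w + 1 := by
    have : G.edist w x ≤ G.edist v x := edist_le_eccent.trans (he.trans hx.ge)
    rw [← (hG.connected w x).coe_dist_eq_edist, ← (hG.connected v x).coe_dist_eq_edist,
      Nat.cast_le, dist_comm, dist_comm (u := v)] at this
    have := hG.dist_eq_dist_add_one_of_adj x h
    omega
  exact hG.eq_of_adj_of_dist_eq_add_one h₁.symm h₂.symm (toward h₁ he₁) (toward h₂ he₂)

variable (h : V → α)

def Flag.IsDown (p : G.Flag) : Prop := ∀ w ∈ (p.1.2 : Sym2 V), h w ≤ h p.1.1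

open Classical in
noncomputable def Flag.proj (p : G.Flag) : V ⊕ G.edgeSet :=
  if p.IsDown h then .inl p.1.1 else .inr p.1.2

def IsCritical (G : SimpleGraph V) (h : V → α) : V ⊕ G.edgeSet → Prop
  | .inl v => ∀ w, G.Adj v w → h v < h w
  | .inr e => ∀ a ∈ (e : Sym2 V), ∀ b ∈ (e : Sym2 V), h a = h b

theorem Dart.toFlag_isDown_iff (d : G.Dart) : d.toFlag.IsDown h ↔ h d.snd ≤ h d.fst := by
  simp [Flag.IsDown, Dart.toFlag, Dart.edge]

theorem Dart.proj_toFlag (d : G.Dart) : d.toFlag.proj h =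
    if h d.snd ≤ h d.fst then .inl d.fst else .inr ⟨d.edge, d.edge_mem⟩ := by
  simp only [Flag.proj, toFlag_isDown_iff]
  rfl

variable {h}

theorem Flag.proj_injective (hdescent : G.UniqueDescent h) :
    Function.Injective (Flag.proj (G := G) h) := by
  refine Function.Injective.of_comp_right (fun d d' hdd' => ?_) Dart.toFlag_bijective.2
  simp only [Function.comp_apply, Dart.proj_toFlag] at hdd'
  split_ifs at hdd' with hd hd₁ hd₂
  · have hfst : d.fst = d'.fst := Sum.inl.inj hdd'
    exact Dart.ext _ _ (Prod.ext hfst (hdescent d.adj (hfst ▸ d'.adj) hd (hfst ▸ hd₁)))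
  · rcases (dart_edge_eq_iff d d').1 (congrArg Subtype.val (Sum.inr.inj hdd')) with rfl | rfl
    · rfl
    · exact absurd ((lt_of_not_ge hd₂).trans (lt_of_not_ge hd)) (lt_irrefl _)

theorem Flag.range_proj : Set.range (Flag.proj (G := G) h) = {x | ¬G.IsCritical h x} := by
  rw [← Dart.toFlag_bijective.2.range_comp]
  ext (v | ⟨e, he⟩)
  · simp only [Set.mem_range, Function.comp_apply, Dart.proj_toFlag, Set.mem_ofPred_eq,
      IsCritical, not_forall, not_lt]
    constructor
    · rintro ⟨d, hd⟩
      split_ifs at hd with hle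
      cases hd
      exact ⟨d.snd, d.adj, hle⟩
    · rintro ⟨w, hvw, hle⟩
      exact ⟨⟨(v, w), hvw⟩, if_pos hle⟩
  · simp only [Set.mem_range, Function.comp_apply, Dart.proj_toFlag, Set.mem_ofPred_eq,
      IsCritical]
    constructor
    · rintro ⟨d, hd⟩ hlevel
      split_ifs at hd with hle
      have hedge : d.edge = e := congrArg Subtype.val (Sum.inr.inj hd)
      rw [← hedge] at hlevel
      exact hle (hlevel _ (Sym2.mem_mk_right _ _) _ (Sym2.mem_mk_left _ _)).le
    · induction e using Sym2.ind with | _ a b => ?_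
      intro hlevel
      have hab : h a ≠ h b := fun hab => hlevel fun x hx y hy => by
        rcases Sym2.mem_iff.1 hx with rfl | rfl <;> rcases Sym2.mem_iff.1 hy with rfl | rfl <;>
          simp [hab]
      rcases hab.lt_or_gt with hab | hab
      · exact ⟨⟨(a, b), he⟩, if_neg (not_le.2 hab)⟩
      · refine ⟨⟨(b, a), G.adj_symm he⟩, ?_⟩
        simp [if_neg (not_le.2 hab), Dart.edge, Sym2.eq_swap]

theorem IsTree.existsUnique_isCritical [Finite V] (hG : G.IsTree)
    (hdescent : G.UniqueDescent h) : ∃! x : V ⊕ G.edgeSet, G.IsCritical h x := by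
  classical
  have := Fintype.ofFinite V
  have hsplit : Nat.card V + Nat.card G.edgeSet =
      Nat.card {x // G.IsCritical h x} + Nat.card {x // ¬G.IsCritical h x} := by
    rw [← Nat.card_sum, ← Nat.card_sum]
    exact Nat.card_congr (Equiv.sumCompl _).symm
  have hnoncritical : Nat.card {x // ¬G.IsCritical h x} = 2 * Nat.card G.edgeSet := by
    rw [← card_flag, Nat.card_congr (Equiv.ofInjective _ (Flag.proj_injective hdescent)),
      Flag.range_proj]
    rfl
  have hedges : Nat.card G.edgeSet + 1 = Nat.card V := by
    simpa [Nat.card_eq_fintype_card, edgeFinset_card] using hG.card_edgeFinset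
  have hcritical : Nat.card {x // G.IsCritical h x} = 1 := by omega
  obtain ⟨⟨x, hx⟩, hunique⟩ := Nat.card_eq_one_iff_exists.1 hcritical
  exact ⟨x, hx, fun y hy => congrArg Subtype.val (hunique ⟨y, hy⟩)⟩

theorem Flag.proj_map (hinv : ∀ (φ : G ≃g G) v, h (φ v) = h v) (φ : G ≃g G) (p : G.Flag) :
    (p.map φ).proj h = Sum.map φ φ.mapEdgeSet (p.proj h) := by
  have hdown : (p.map φ).IsDown h ↔ p.IsDown h := by
    simp only [Flag.IsDown, Flag.map, Iso.mapEdgeSet_apply, Hom.mapEdgeSet_coe, Sym2.mem_map,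
      forall_exists_index, and_imp, forall_apply_eq_imp_iff₂, RelEmbedding.coe_toRelHom,
      RelIso.coe_toRelEmbedding, hinv]
  unfold Flag.proj
  split_ifs <;> simp_all [Flag.map]

theorem isCritical_map (hinv : ∀ (φ : G ≃g G) v, h (φ v) = h v) (φ : G ≃g G)
    (x : V ⊕ G.edgeSet) :
    G.IsCritical h (Sum.map φ φ.mapEdgeSet x) ↔ G.IsCritical h x := by
  rcases x with v | e
  · simp only [IsCritical, Sum.map_inl]
    rw [φ.surjective.forall]
    simp only [φ.map_adj_iff, hinv]
  · simp only [IsCritical, Sum.map_inr, Iso.mapEdgeSet_apply, Hom.mapEdgeSet_coe, Sym2.mem_map,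
      forall_exists_index, and_imp, forall_apply_eq_imp_iff₂, RelEmbedding.coe_toRelHom,
      RelIso.coe_toRelEmbedding, hinv]

theorem exists_orbitClass_proj_eq_iff (hinv : ∀ (φ : G ≃g G) v, h (φ v) = h v)
    (x : V ⊕ G.edgeSet) :
    (∃ p : G.Flag, orbitClass (p.proj h) = orbitClass x) ↔ ¬G.IsCritical h x := by
  rw [← Set.mem_ofPred (p := fun x => ¬G.IsCritical h x), ← Flag.range_proj]
  constructor
  · rintro ⟨p, hp⟩
    obtain ⟨φ, hφ⟩ := orbitClass_eq_iff.1 hp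
    exact ⟨p.map φ, (Flag.proj_map hinv φ p).trans hφ⟩
  · rintro ⟨p, rfl⟩
    exact ⟨p, rfl⟩

theorem card_orbits_of_existsUnique_isCritical [Finite V]
    (hinv : ∀ (φ : G ≃g G) v, h (φ v) = h v) (hdescent : G.UniqueDescent h)
    (hcrit : ∃! x : V ⊕ G.edgeSet, G.IsCritical h x) :
    Nat.card (Quotient (vertexOrbitSetoid G)) + Nat.card (Quotient (edgeOrbitSetoid G))
      = 1 + Nat.card (Quotient (flagOrbitSetoid G)) := by
  obtain ⟨x₀, hx₀, hx₀_unique⟩ := hcrit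
  let F : Quotient (flagOrbitSetoid G) → _ :=
    Quotient.lift (fun p : G.Flag => orbitClass (p.proj h)) fun p q hpq => by
      obtain ⟨φ, rfl⟩ := Flag.mk_eq_mk_iff.1 (Quotient.sound hpq)
      exact orbitClass_eq_iff.2 ⟨φ, (Flag.proj_map hinv φ p).symm⟩
  have hF_inj : Function.Injective F := by
    rintro ⟨p⟩ ⟨q⟩ hpq
    obtain ⟨φ, hφ⟩ := orbitClass_eq_iff.1 hpq
    rw [← Flag.proj_map hinv] at hφ
    exact Flag.mk_eq_mk_iff.2 ⟨φ, Flag.proj_injective hdescent hφ⟩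
  have hfixed (x : V ⊕ G.edgeSet) : orbitClass x = orbitClass x₀ ↔ x = x₀ :=
    orbitClass_eq_iff.trans
      ⟨fun ⟨φ, hφ⟩ => hx₀_unique x ((isCritical_map hinv φ x).1 (hφ ▸ hx₀)),
        fun hx => ⟨Iso.refl, by subst hx; cases x <;> simp [Subtype.ext_iff]⟩⟩
  have hF_range : Set.range F = {orbitClass x₀}ᶜ := by
    ext y
    obtain ⟨x, rfl⟩ := orbitClass_surjective y
    rw [Set.mem_range, Quotient.exists, Set.mem_compl_singleton_iff, ne_eq, hfixed]
    exact (exists_orbitClass_proj_eq_iff hinv x).trans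
      ⟨fun hx hxx₀ => hx (hxx₀ ▸ hx₀), fun hx hc => hx (hx₀_unique x hc)⟩
  rw [← Nat.card_sum, add_comm]
  exact Nat.card_eq_card_add_one_of_range_eq_compl_singleton hF_inj hF_range

end Height

end SimpleGraph

/-- For a finite tree, the number of orbits of vertices plus the number of orbits of
edges under the automorphism group equals `1` plus the number of orbits of incident
vertex–edge pairs. -/
theorem orbit_count_tree {V : Type*} [Fintype V] (G : SimpleGraph V) (hG : G.IsTree) :
    Nat.card (Quotient (vertexOrbitSetoid G)) + Nat.card (Quotient (edgeOrbitSetoid G))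
      = 1 + Nat.card (Quotient (flagOrbitSetoid G)) :=
  card_orbits_of_existsUnique_isCritical (fun φ => φ.eccent_eq) hG.uniqueDescent_eccent
    (hG.existsUnique_isCritical hG.uniqueDescent_eccent)
end
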